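/- arXiv:2205.01869 — 3 statements merged into one kernel-verified Lean document; each statement's English description precedes it below -/
import Mathlib

section
/- The portfolio valuation function v is a nondecreasing submodular set function: for all X, Y ⊆ C, v(X) + v(Y) ≥ v(X ∪ Y) + v(X ∩ Y), and X ⊆ Y implies v(X) ≤ v(Y). -/
/-!
Since `t` is monotone, `val f t X` is the expected value of `t j` for the largest `j ∈ X`
with `Z j = 1`. Adding a project `a ∉ X` raises the value by
`f a * (t a - val f t {j ∈ X | j < a}) * ∏ i ∈ X with a < i, (1 - f i)`: the new project
counts only if it succeeds and every project above it fails, and it then replaces the best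
success below it. Both factors `t a - val f t {j ∈ X | j < a}` and
`∏ i ∈ X with a < i, (1 - f i)` are nonnegative and shrink as `X` grows, so marginal gains are
nonnegative and diminishing, which is monotonicity and submodularity.
-/

noncomputable def val (f t : ℕ → ℝ) (X : Finset ℕ) : ℝ :=
  ∑ j ∈ X, f j * t j * ∏ i ∈ X.filter (fun i => j < i), (1 - f i)

section SetFunction

variable {α β : Type*} [DecidableEq α] {g : Finset α → β} {U : Finset α}

theorem Finset.monotoneOn_Iic_of_le_insert [Preorder β]
    (hg : ∀ a T, insert a T ⊆ U → a ∉ T → g T ≤ g (insert a T)) :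
    MonotoneOn g (Set.Iic U) := by
  suffices h : ∀ D X, X ∪ D ⊆ U → g X ≤ g (X ∪ D) by
    intro X _ Y (hY : Y ⊆ U) (hXY : X ⊆ Y)
    rw [← union_sdiff_of_subset hXY] at hY ⊢
    exact h _ _ hY
  intro D
  induction D using Finset.induction_on with
  | empty => simp
  | insert a D _ ih =>
    intro X hU
    rw [union_insert] at hU ⊢
    by_cases ha : a ∈ X ∪ D
    · rw [insert_eq_of_mem ha] at hU ⊢
      exact ih X hU
    · exact (ih X ((subset_insert _ _).trans hU)).trans (hg a _ hU ha)

theorem Finset.union_add_inter_le_of_diminishing_returns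
    [AddCommGroup β] [PartialOrder β] [IsOrderedAddMonoid β]
    (hg : ∀ a S T, S ⊆ T → insert a T ⊆ U → a ∉ T →
      g (insert a T) - g T ≤ g (insert a S) - g S)
    {X Y : Finset α} (hX : X ⊆ U) (hY : Y ⊆ U) :
    g (X ∪ Y) + g (X ∩ Y) ≤ g X + g Y := by
  suffices h : ∀ D S T, S ⊆ T → Disjoint D T → T ∪ D ⊆ U →
      g (T ∪ D) - g T ≤ g (S ∪ D) - g S by
    have key := h (Y \ X) (X ∩ Y) X inter_subset_left disjoint_sdiff_self_left
      (by simpa using union_subset hX hY)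
    have hY' : X ∩ Y ∪ Y \ X = Y := by rw [union_comm, inter_comm, sdiff_union_inter]
    rw [union_sdiff_self_eq_union, hY', sub_le_sub_iff] at key
    rwa [add_comm (g X)]
  intro D
  induction D using Finset.induction_on with
  | empty => simp
  | insert a D haD ih =>
    intro S T hST hDT hU
    rw [disjoint_insert_left] at hDT
    simp only [union_insert] at hU ⊢
    have haTD : a ∉ T ∪ D := by simp [hDT.1, haD]
    calc g (insert a (T ∪ D)) - g T
        = (g (insert a (T ∪ D)) - g (T ∪ D)) + (g (T ∪ D) - g T) := by abel
      _ ≤ (g (insert a (S ∪ D)) - g (S ∪ D)) + (g (S ∪ D) - g S) :=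
        add_le_add (hg a _ _ (union_subset_union_left hST) hU haTD)
          (ih S T hST hDT.2 ((subset_insert _ _).trans hU))
      _ = g (insert a (S ∪ D)) - g S := by abel

end SetFunction

open Finset hiding val

theorem val_union_of_forall_lt (f t : ℕ → ℝ) {A B : Finset ℕ}
    (hAB : ∀ i ∈ A, ∀ j ∈ B, i < j) :
    val f t (A ∪ B) = val f t A * ∏ i ∈ B, (1 - f i) + val f t B := by
  have hdisj : Disjoint A B := disjoint_left.2 fun i hiA hiB => (hAB i hiA i hiB).false
  unfold val
  rw [sum_union hdisj, sum_mul]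
  congr 1
  · refine sum_congr rfl fun j hj => ?_
    rw [filter_union, prod_union (disjoint_filter_filter hdisj),
      filter_true_of_mem fun i hi => hAB j hj i hi]
    ring
  · refine sum_congr rfl fun j hj => ?_
    rw [filter_union, filter_false_of_mem fun i hi => (hAB i hi j hj).asymm, empty_union]

theorem val_insert_of_forall_lt (f t : ℕ → ℝ) {a : ℕ} {X : Finset ℕ} (h : ∀ i ∈ X, i < a) :
    val f t (insert a X) = val f t X * (1 - f a) + f a * t a := by
  rw [insert_eq, union_comm,
    val_union_of_forall_lt f t fun i hi j hj => mem_singleton.1 hj ▸ h i hi]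
  simp [val, filter_singleton]

theorem val_insert (f t : ℕ → ℝ) {a : ℕ} {X : Finset ℕ} (ha : a ∉ X) :
    val f t (insert a X) = val f t X
      + f a * (t a - val f t {j ∈ X | j < a}) * ∏ i ∈ X with a < i, (1 - f i) := by
  set L := {j ∈ X | j < a}
  set R := {j ∈ X | a < j}
  have hX : X = L ∪ R := by
    ext j
    simp only [L, R, mem_union, mem_filter]
    have := fun hj : j ∈ X => ne_of_mem_of_not_mem hj ha
    grind
  have hLa : ∀ i ∈ L, i < a := fun i hi => (mem_filter.1 hi).2
  have hLR : ∀ i ∈ L, ∀ j ∈ R, i < j :=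
    fun i hi j hj => (hLa i hi).trans (mem_filter.1 hj).2
  have haLR : ∀ i ∈ insert a L, ∀ j ∈ R, i < j := by
    intro i hi j hj
    rcases mem_insert.1 hi with rfl | hi
    exacts [(mem_filter.1 hj).2, hLR i hi j hj]
  have hinsert : insert a X = insert a L ∪ R := by rw [insert_union, ← hX]
  rw [hinsert, val_union_of_forall_lt f t haLR, val_insert_of_forall_lt f t hLa]
  nth_rw 1 [hX]
  rw [val_union_of_forall_lt f t hLR]
  ring

theorem val_le {f t : ℕ → ℝ} {X : Finset ℕ} {c : ℝ} (hc : 0 ≤ c)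
    (hf : ∀ j ∈ X, 0 ≤ f j ∧ f j ≤ 1) (ht : ∀ j ∈ X, t j ≤ c) : val f t X ≤ c := by
  induction X using Finset.induction_on_max with
  | empty => simpa [val] using hc
  | insert a X hlt ih =>
    rw [val_insert_of_forall_lt f t hlt]
    obtain ⟨hfa₀, hfa₁⟩ := hf a (mem_insert_self a X)
    have hX := ih (fun j hj => hf j (mem_insert_of_mem hj))
      (fun j hj => ht j (mem_insert_of_mem hj))
    nlinarith [mul_le_mul_of_nonneg_left hX (sub_nonneg.2 hfa₁),
      mul_le_mul_of_nonneg_left (ht a (mem_insert_self a X)) hfa₀]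

section Marginal

variable {f t : ℕ → ℝ} {U : Finset ℕ} {a : ℕ}

theorem val_filter_lt_le (hf : ∀ j ∈ U, 0 ≤ f j ∧ f j ≤ 1) (ht : ∀ j ∈ U, 0 ≤ t j)
    (hmono : Monotone t) {X : Finset ℕ} (hU : insert a X ⊆ U) :
    val f t {j ∈ X | j < a} ≤ t a :=
  val_le (ht a (hU (mem_insert_self a X)))
    (fun j hj => hf j (hU (mem_insert_of_mem (mem_filter.1 hj).1)))
    (fun _ hj => hmono (mem_filter.1 hj).2.le)

theorem prod_filter_one_sub_nonneg (hf : ∀ j ∈ U, 0 ≤ f j ∧ f j ≤ 1) {X : Finset ℕ}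
    (hU : X ⊆ U) : 0 ≤ ∏ i ∈ X with a < i, (1 - f i) :=
  prod_nonneg fun i hi => sub_nonneg.2 (hf i (hU (mem_filter.1 hi).1)).2

theorem val_le_val_insert (hf : ∀ j ∈ U, 0 ≤ f j ∧ f j ≤ 1) (ht : ∀ j ∈ U, 0 ≤ t j)
    (hmono : Monotone t) {X : Finset ℕ} (hU : insert a X ⊆ U) (ha : a ∉ X) :
    val f t X ≤ val f t (insert a X) := by
  rw [val_insert f t ha]
  refine le_add_of_nonneg_right (mul_nonneg (mul_nonneg ?_ ?_) ?_)
  · exact (hf a (hU (mem_insert_self a X))).1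
  · exact sub_nonneg.2 (val_filter_lt_le hf ht hmono hU)
  · exact prod_filter_one_sub_nonneg hf ((subset_insert a X).trans hU)

theorem val_monotoneOn (hf : ∀ j ∈ U, 0 ≤ f j ∧ f j ≤ 1) (ht : ∀ j ∈ U, 0 ≤ t j)
    (hmono : Monotone t) : MonotoneOn (val f t) (Set.Iic U) :=
  Finset.monotoneOn_Iic_of_le_insert fun _ _ hU ha => val_le_val_insert hf ht hmono hU ha

theorem val_insert_sub_le (hf : ∀ j ∈ U, 0 ≤ f j ∧ f j ≤ 1) (ht : ∀ j ∈ U, 0 ≤ t j)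
    (hmono : Monotone t) {S T : Finset ℕ} (hST : S ⊆ T) (hU : insert a T ⊆ U) (ha : a ∉ T) :
    val f t (insert a T) - val f t T ≤ val f t (insert a S) - val f t S := by
  rw [val_insert f t ha, val_insert f t fun h => ha (hST h), add_sub_cancel_left,
    add_sub_cancel_left]
  have hTU : T ⊆ U := (subset_insert a T).trans hU
  have hfa : 0 ≤ f a := (hf a (hU (mem_insert_self a T))).1
  have hval : val f t {j ∈ S | j < a} ≤ val f t {j ∈ T | j < a} :=
    val_monotoneOn hf ht hmono ((filter_subset _ _).trans (hST.trans hTU))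
      ((filter_subset _ _).trans hTU) (filter_subset_filter _ hST)
  have hprod : ∏ i ∈ T with a < i, (1 - f i) ≤ ∏ i ∈ S with a < i, (1 - f i) :=
    prod_le_prod_of_subset_of_le_one (filter_subset_filter _ hST)
      (fun i hi => sub_nonneg.2 (hf i (hTU (mem_filter.1 hi).1)).2)
      (fun i hi _ => sub_le_self _ (hf i (hTU (mem_filter.1 hi).1)).1)
  have hgap : 0 ≤ t a - val f t {j ∈ T | j < a} :=
    sub_nonneg.2 (val_filter_lt_le hf ht hmono hU)
  exact mul_le_mul (mul_le_mul_of_nonneg_left (by linarith) hfa) hprod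
    (prod_filter_one_sub_nonneg hf hTU) (mul_nonneg hfa (by linarith))

end Marginal

/-- the valuation is a nondecreasing submodular set function. -/
theorem stmt_4 (m : ℕ) (f t : ℕ → ℝ)
    (hf : ∀ j ∈ Finset.Icc 1 m, 0 < f j ∧ f j ≤ 1)
    (ht : ∀ j ∈ Finset.Icc 1 m, 0 ≤ t j) (hmono : Monotone t) :
    (∀ X ⊆ Finset.Icc 1 m, ∀ Y ⊆ Finset.Icc 1 m,
        val f t (X ∪ Y) + val f t (X ∩ Y) ≤ val f t X + val f t Y) ∧
    (∀ X Y : Finset ℕ, X ⊆ Y → Y ⊆ Finset.Icc 1 m → val f t X ≤ val f t Y) := by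
  have hf' : ∀ j ∈ Finset.Icc 1 m, 0 ≤ f j ∧ f j ≤ 1 :=
    fun j hj => ⟨(hf j hj).1.le, (hf j hj).2⟩
  refine ⟨fun X hX Y hY => ?_, fun X Y hXY hY => ?_⟩
  · exact Finset.union_add_inter_le_of_diminishing_returns
      (fun _ _ _ hST hU ha => val_insert_sub_le hf' ht hmono hST hU ha) hX hY
  · exact val_monotoneOn hf' ht hmono (hXY.trans hY) hY hXY
end

section
/- The naïve portfolio T_h consisting of the h schools with the largest values of f_j t_j satisfies v(T_h) ≥ (1/h) v(X_h), where X_h is an optimal portfolio of cardinality at most h. -/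
/-!
Since t is monotone, v(T) ≥ f_j t_j for each j ∈ T: the schools of T from j upward alone yield at
least t_j with probability 1 - ∏ (1 - f_i) ≥ f_j. Hence h · v(T) ≥ ∑_{j ∈ T} f_j t_j, which by the
choice of T dominates ∑_{j ∈ X} f_j t_j ≥ v(X).
-/

open Finset

theorem Finset.sum_mul_prod_filter_lt_eq_one_sub_prod {α R : Type*} [LinearOrder α] [CommRing R]
    (f : α → R) (S : Finset α) :
    ∑ l ∈ S, f l * ∏ i ∈ S.filter (fun i => l < i), (1 - f i) = 1 - ∏ i ∈ S, (1 - f i) := by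
  induction S using Finset.induction_on_max with
  | empty => simp
  | insert a s ha ih =>
    have ha' : a ∉ s := fun h => lt_irrefl a (ha a h)
    have h_top : (insert a s).filter (fun i => a < i) = ∅ :=
      filter_eq_empty_iff.2 fun i hi => by
        rcases mem_insert.1 hi with rfl | hi
        exacts [lt_irrefl i, (ha i hi).not_gt]
    have h_below : ∀ l ∈ s, (insert a s).filter (fun i => l < i)
        = insert a (s.filter (fun i => l < i)) := fun l hl => by
      rw [filter_insert, if_pos (ha l hl)]
    have h_rest : ∑ l ∈ s, f l * ∏ i ∈ (insert a s).filter (fun i => l < i), (1 - f i)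
        = (1 - f a) * ∑ l ∈ s, f l * ∏ i ∈ s.filter (fun i => l < i), (1 - f i) := by
      rw [mul_sum]
      refine sum_congr rfl fun l hl => ?_
      rw [h_below l hl, prod_insert fun h => ha' (mem_of_mem_filter a h)]
      ring
    rw [sum_insert ha', h_top, prod_insert ha', h_rest, ih, prod_empty]
    ring

section val

variable {f t : ℕ → ℝ} {S : Finset ℕ}

lemma prod_one_sub_nonneg (hf1 : ∀ i ∈ S, f i ≤ 1) : 0 ≤ ∏ i ∈ S, (1 - f i) :=
  prod_nonneg fun i hi => sub_nonneg.2 (hf1 i hi)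

lemma val_term_nonneg (hf0 : ∀ i ∈ S, 0 ≤ f i) (hf1 : ∀ i ∈ S, f i ≤ 1)
    (ht : ∀ i ∈ S, 0 ≤ t i) {j : ℕ} (hj : j ∈ S) :
    0 ≤ f j * t j * ∏ i ∈ S.filter (fun i => j < i), (1 - f i) :=
  mul_nonneg (mul_nonneg (hf0 j hj) (ht j hj))
    (prod_one_sub_nonneg fun i hi => hf1 i (mem_of_mem_filter i hi))

lemma val_nonneg (hf0 : ∀ i ∈ S, 0 ≤ f i) (hf1 : ∀ i ∈ S, f i ≤ 1)
    (ht : ∀ i ∈ S, 0 ≤ t i) : 0 ≤ val f t S :=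
  sum_nonneg fun _ hj => val_term_nonneg hf0 hf1 ht hj

lemma val_le_sum_mul (hf0 : ∀ i ∈ S, 0 ≤ f i) (hf1 : ∀ i ∈ S, f i ≤ 1)
    (ht : ∀ i ∈ S, 0 ≤ t i) : val f t S ≤ ∑ j ∈ S, f j * t j :=
  sum_le_sum fun j hj => mul_le_of_le_one_right (mul_nonneg (hf0 j hj) (ht j hj))
    (prod_le_one (fun i hi => sub_nonneg.2 (hf1 i (mem_of_mem_filter i hi)))
      fun i hi => sub_le_self _ (hf0 i (mem_of_mem_filter i hi)))

lemma val_filter_le_le_val (hf0 : ∀ i ∈ S, 0 ≤ f i) (hf1 : ∀ i ∈ S, f i ≤ 1)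
    (ht : ∀ i ∈ S, 0 ≤ t i) (j : ℕ) : val f t (S.filter (fun i => j ≤ i)) ≤ val f t S := by
  have h_tail : ∀ l ∈ S.filter (fun i => j ≤ i),
      (S.filter (fun i => j ≤ i)).filter (fun i => l < i) = S.filter (fun i => l < i) :=
    fun l hl => by
      rw [filter_filter]
      exact filter_congr fun i _ => and_iff_right_of_imp fun hli =>
        (mem_filter.1 hl).2.trans hli.le
  calc val f t (S.filter (fun i => j ≤ i))
      = ∑ l ∈ S.filter (fun i => j ≤ i), f l * t l * ∏ i ∈ S.filter (fun i => l < i), (1 - f i) :=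
        sum_congr rfl fun l hl => by rw [h_tail l hl]
    _ ≤ val f t S := sum_le_sum_of_subset_of_nonneg (filter_subset _ _)
        fun _ hl _ => val_term_nonneg hf0 hf1 ht hl

lemma mul_one_sub_prod_le_val (hf0 : ∀ i ∈ S, 0 ≤ f i) (hf1 : ∀ i ∈ S, f i ≤ 1) {c : ℝ}
    (hc : ∀ i ∈ S, c ≤ t i) : c * (1 - ∏ i ∈ S, (1 - f i)) ≤ val f t S := by
  rw [← sum_mul_prod_filter_lt_eq_one_sub_prod, mul_sum]
  refine sum_le_sum fun l hl => ?_
  have hprod := prod_one_sub_nonneg fun i hi => hf1 i (mem_of_mem_filter (p := (l < ·)) i hi)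
  calc c * (f l * ∏ i ∈ S.filter (fun i => l < i), (1 - f i))
      ≤ t l * (f l * ∏ i ∈ S.filter (fun i => l < i), (1 - f i)) :=
        mul_le_mul_of_nonneg_right (hc l hl) (mul_nonneg (hf0 l hl) hprod)
    _ = f l * t l * ∏ i ∈ S.filter (fun i => l < i), (1 - f i) := by ring

lemma le_one_sub_prod_one_sub (hf0 : ∀ i ∈ S, 0 ≤ f i) (hf1 : ∀ i ∈ S, f i ≤ 1) {j : ℕ}
    (hj : j ∈ S) : f j ≤ 1 - ∏ i ∈ S, (1 - f i) := by
  have h_rest : ∏ i ∈ S.erase j, (1 - f i) ≤ 1 :=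
    prod_le_one (fun i hi => sub_nonneg.2 (hf1 i (mem_of_mem_erase hi)))
      fun i hi => sub_le_self _ (hf0 i (mem_of_mem_erase hi))
  have := mul_le_of_le_one_right (sub_nonneg.2 (hf1 j hj)) h_rest
  rw [← mul_prod_erase S _ hj]
  linarith

lemma mul_le_val (hf0 : ∀ i ∈ S, 0 ≤ f i) (hf1 : ∀ i ∈ S, f i ≤ 1) (ht : ∀ i ∈ S, 0 ≤ t i)
    (hmono : MonotoneOn t S) {j : ℕ} (hj : j ∈ S) : f j * t j ≤ val f t S := by
  set U := S.filter (fun i => j ≤ i)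
  have hU : U ⊆ S := filter_subset _ _
  have hjU : j ∈ U := mem_filter.2 ⟨hj, le_rfl⟩
  calc f j * t j = t j * f j := mul_comm _ _
    _ ≤ t j * (1 - ∏ i ∈ U, (1 - f i)) := mul_le_mul_of_nonneg_left
        (le_one_sub_prod_one_sub (fun i hi => hf0 i (hU hi)) (fun i hi => hf1 i (hU hi)) hjU)
        (ht j hj)
    _ ≤ val f t U := mul_one_sub_prod_le_val (fun i hi => hf0 i (hU hi))
        (fun i hi => hf1 i (hU hi)) fun i hi => hmono hj (hU hi) (mem_filter.1 hi).2
    _ ≤ val f t S := val_filter_le_le_val hf0 hf1 ht j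

lemma sum_mul_le_card_mul_val (hf0 : ∀ i ∈ S, 0 ≤ f i) (hf1 : ∀ i ∈ S, f i ≤ 1)
    (ht : ∀ i ∈ S, 0 ≤ t i) (hmono : MonotoneOn t S) :
    ∑ j ∈ S, f j * t j ≤ S.card * val f t S := by
  simpa only [nsmul_eq_mul] using
    sum_le_card_nsmul S _ _ fun j hj => mul_le_val hf0 hf1 ht hmono hj

end val

theorem stmt_6_general (m h : ℕ) (f t : ℕ → ℝ) (T X : Finset ℕ)
    (hf : ∀ j ∈ Finset.Icc 1 m, 0 < f j ∧ f j ≤ 1)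
    (ht : ∀ j ∈ Finset.Icc 1 m, 0 ≤ t j) (hmono : Monotone t)
    (hT : T ⊆ Finset.Icc 1 m) (hTcard : T.card = h)
    (hTopt : ∀ S ⊆ Finset.Icc 1 m, S.card = h →
      ∑ j ∈ S, f j * t j ≤ ∑ j ∈ T, f j * t j)
    (hXsub : X ⊆ Finset.Icc 1 m) (hXcard : X.card ≤ h) :
    (1 / h : ℝ) * val f t X ≤ val f t T := by
  have hf0 : ∀ j ∈ Icc 1 m, 0 ≤ f j := fun j hj => (hf j hj).1.le
  have hf1 : ∀ j ∈ Icc 1 m, f j ≤ 1 := fun j hj => (hf j hj).2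
  obtain ⟨X', hXX', hX', hX'card⟩ :=
    exists_subsuperset_card_eq hXsub hXcard (hTcard ▸ card_le_card hT)
  have h_sum_X' : ∑ j ∈ X, f j * t j ≤ ∑ j ∈ X', f j * t j :=
    sum_le_sum_of_subset_of_nonneg hXX' fun j hj _ => mul_nonneg (hf0 j (hX' hj)) (ht j (hX' hj))
  have h_sum_T : ∑ j ∈ T, f j * t j ≤ T.card * val f t T :=
    sum_mul_le_card_mul_val (fun i hi => hf0 i (hT hi)) (fun i hi => hf1 i (hT hi))
      (fun i hi => ht i (hT hi)) (hmono.monotoneOn _)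
  have h_val_X : val f t X ≤ h * val f t T := by
    calc val f t X ≤ ∑ j ∈ X, f j * t j := val_le_sum_mul (fun i hi => hf0 i (hXsub hi))
          (fun i hi => hf1 i (hXsub hi)) fun i hi => ht i (hXsub hi)
      _ ≤ ∑ j ∈ T, f j * t j := h_sum_X'.trans (hTopt X' hX' hX'card)
      _ ≤ h * val f t T := hTcard ▸ h_sum_T
  rw [one_div]
  exact inv_mul_le_of_le_mul₀ h.cast_nonneg (val_nonneg (fun i hi => hf0 i (hT hi))
    (fun i hi => hf1 i (hT hi)) fun i hi => ht i (hT hi)) h_val_X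

/-- the naïve portfolio is a 1/h-approximation. -/
theorem stmt_6 (m h : ℕ) (f t : ℕ → ℝ) (T X : Finset ℕ)
    (hh : 1 ≤ h)
    (hf : ∀ j ∈ Finset.Icc 1 m, 0 < f j ∧ f j ≤ 1)
    (ht : ∀ j ∈ Finset.Icc 1 m, 0 ≤ t j) (hmono : Monotone t)
    (hT : T ⊆ Finset.Icc 1 m) (hTcard : T.card = h)
    (hTopt : ∀ S ⊆ Finset.Icc 1 m, S.card = h →
      ∑ j ∈ S, f j * t j ≤ ∑ j ∈ T, f j * t j)
    (hXsub : X ⊆ Finset.Icc 1 m) (hXcard : X.card ≤ h)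
    (hXopt : ∀ S ⊆ Finset.Icc 1 m, S.card ≤ h → val f t S ≤ val f t X) :
    (1 / h : ℝ) * val f t X ≤ val f t T :=
  stmt_6_general m h f t T X hf ht hmono hT hTcard hTopt hXsub hXcard
end

section
/- Monotone exchange inequality: if Y and X are portfolios with v(Y) ≤ v(X) and k ∉ X ∪ Y has t_k ≥ t_j for all j ∈ X ∪ Y, then v(Y ∪ {k}) ≤ v(X ∪ {k}). -/
lemma val_insert_top (f t : ℕ → ℝ) (k : ℕ) (X : Finset ℕ)
    (hk : k ∉ X) (hlt : ∀ j ∈ X, j < k) :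
    val f t (insert k X) = f k * t k + (1 - f k) * val f t X := by
  unfold val
  rw [Finset.sum_insert hk]
  have h1 : (insert k X).filter (fun i => k < i) = ∅ := by
    apply Finset.filter_eq_empty_iff.mpr
    intro i hi
    rcases Finset.mem_insert.mp hi with rfl | hi
    · exact lt_irrefl _
    · exact not_lt_of_gt (hlt i hi)
  rw [h1, Finset.prod_empty, mul_one, Finset.mul_sum]
  congr 1
  apply Finset.sum_congr rfl
  intro j hj
  have h2 : (insert k X).filter (fun i => j < i) = insert k (X.filter (fun i => j < i)) := by
    rw [Finset.filter_insert, if_pos (hlt j hj)]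
  rw [h2, Finset.prod_insert (fun h => hk (Finset.mem_filter.mp h).1)]
  ring

/-- monotone exchange inequality. -/
theorem stmt_10 (f t : ℕ → ℝ) (k : ℕ) (X Y : Finset ℕ)
    (hf : ∀ j, 0 < f j ∧ f j ≤ 1) (ht : ∀ j, 0 ≤ t j)
    (hk : k ∉ X ∪ Y) (hlt : ∀ j ∈ X ∪ Y, j < k) (hmax : ∀ j ∈ X ∪ Y, t j ≤ t k)
    (hvXY : val f t Y ≤ val f t X) :
    val f t (insert k Y) ≤ val f t (insert k X) := by
  rw [val_insert_top f t k X (fun h => hk (Finset.mem_union_left _ h))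
      (fun j hj => hlt j (Finset.mem_union_left _ hj)),
    val_insert_top f t k Y (fun h => hk (Finset.mem_union_right _ h))
      (fun j hj => hlt j (Finset.mem_union_right _ hj))]
  have : 0 ≤ 1 - f k := by linarith [(hf k).2]
  nlinarith
end
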